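/- arXiv:2306.09602 — 6 statements merged into one kernel-verified Lean document; each statement's English description precedes it below -/
import Mathlib

section
/- Let R be a commutative Noetherian ring, σ a finite type, m a monomial order on σ →₀ ℕ, and I an ideal of MvPolynomial σ R. Then for every head monomial (c,t) ∈ HD(I) there exists a monomial (d,t') ∈ MinMon(HD(I)) with (d,t') dividing (c,t), i.e., d ∣ c in R and t' ≤ t in σ →₀ ℕ. -/
open MvPolynomial

/-- Head term of a polynomial with respect to a monomial order. -/
noncomputable def MonomialOrder.degree' {σ R : Type*} [CommSemiring R] (m : MonomialOrder σ)
    (p : MvPolynomial σ R) : σ →₀ ℕ :=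
  m.toSyn.symm (p.support.sup fun s => m.toSyn s)

/-- Head coefficient of a polynomial with respect to a monomial order. -/
noncomputable def MonomialOrder.leadCoeff' {σ R : Type*} [CommSemiring R] (m : MonomialOrder σ)
    (p : MvPolynomial σ R) : R :=
  p.coeff (m.degree' p)

/-- The set of head monomials of an ideal, as pairs (coefficient, term). -/
def HD {σ R : Type*} [CommRing R] (m : MonomialOrder σ) (I : Ideal (MvPolynomial σ R)) :
    Set (R × (σ →₀ ℕ)) :=
  {ct | ∃ p ∈ I, p ≠ 0 ∧ m.degree' p = ct.2 ∧ m.leadCoeff' p = ct.1}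

/-- Divisibility of monomials, represented as pairs (coefficient, term). -/
def MonDvd {σ R : Type*} [CommRing R] (a b : R × (σ →₀ ℕ)) : Prop :=
  a.1 ∣ b.1 ∧ a.2 ≤ b.2

/-- The divisibility-minimal monomials of a set of monomials: those not strictly divided
by any monomial of the set. -/
def MinMon {σ R : Type*} [CommRing R] (S : Set (R × (σ →₀ ℕ))) : Set (R × (σ →₀ ℕ)) :=
  {a ∈ S | ¬ ∃ b ∈ S, MonDvd b a ∧ ¬ MonDvd a b}

/-!
Sending a monomial `(c, t)` to `(span {c}, t)`, with the ideal order reversed, turns monomial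
divisibility into the product order on `(Ideal R)ᵒᵈ × (σ →₀ ℕ)`. Both factors are well-founded
(ascending chains of ideals stabilise in a Noetherian ring, and `σ →₀ ℕ` is well-founded by
Dickson's lemma), so strict divisibility is well-founded and below every element of a set of
monomials there is a minimal one.
-/

open OrderDual

section MonDvd

variable {σ R : Type*} [CommRing R]

theorem MonDvd.trans {a b c : R × (σ →₀ ℕ)} (hab : MonDvd a b) (hbc : MonDvd b c) :
    MonDvd a c :=
  ⟨hab.1.trans hbc.1, hab.2.trans hbc.2⟩

def monomialKey (a : R × (σ →₀ ℕ)) : (Ideal R)ᵒᵈ × (σ →₀ ℕ) :=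
  (toDual (Ideal.span {a.1}), a.2)

theorem monDvd_iff_monomialKey_le {a b : R × (σ →₀ ℕ)} :
    MonDvd a b ↔ monomialKey a ≤ monomialKey b := by
  simp only [MonDvd, monomialKey, Prod.mk_le_mk, toDual_le_toDual,
    Ideal.span_singleton_le_span_singleton]

theorem wellFounded_strictMonDvd [IsNoetherianRing R] :
    WellFounded fun a b : R × (σ →₀ ℕ) => MonDvd a b ∧ ¬ MonDvd b a :=
  Subrelation.wf
    (fun h => lt_of_le_not_ge (monDvd_iff_monomialKey_le.1 h.1)
      (mt monDvd_iff_monomialKey_le.2 h.2))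
    (InvImage.wf monomialKey wellFounded_lt)

theorem exists_mem_minMon_monDvd [IsNoetherianRing R] {S : Set (R × (σ →₀ ℕ))}
    {a : R × (σ →₀ ℕ)} (ha : a ∈ S) : ∃ b ∈ MinMon S, MonDvd b a := by
  obtain ⟨b, ⟨hbS, hba⟩, hmin⟩ :=
    wellFounded_strictMonDvd.has_min {x | x ∈ S ∧ MonDvd x a} ⟨a, ha, dvd_rfl, le_rfl⟩
  refine ⟨b, ⟨hbS, ?_⟩, hba⟩
  rintro ⟨x, hxS, hxb, hbx⟩
  exact hmin x ⟨hxS, hxb.trans hba⟩ ⟨hxb, hbx⟩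

end MonDvd

theorem exists_minMon_dvd_general {σ R : Type*} [CommRing R] [IsNoetherianRing R]
    (m : MonomialOrder σ) (I : Ideal (MvPolynomial σ R)) :
    ∀ c : R, ∀ t : σ →₀ ℕ, (c, t) ∈ HD m I →
      ∃ d : R, ∃ t' : σ →₀ ℕ, (d, t') ∈ MinMon (HD m I) ∧ d ∣ c ∧ t' ≤ t := by
  intro c t hct
  obtain ⟨⟨d, t'⟩, hmin, hd, ht⟩ := exists_mem_minMon_monDvd hct
  exact ⟨d, t', hmin, hd, ht⟩

/-- Every head monomial of an ideal is divisible by a minimal head monomial. -/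
theorem exists_minMon_dvd {σ R : Type*} [CommRing R] [IsNoetherianRing R] [Finite σ]
    (m : MonomialOrder σ) (I : Ideal (MvPolynomial σ R)) :
    ∀ c : R, ∀ t : σ →₀ ℕ, (c, t) ∈ HD m I →
      ∃ d : R, ∃ t' : σ →₀ ℕ, (d, t') ∈ MinMon (HD m I) ∧ d ∣ c ∧ t' ≤ t :=
  exists_minMon_dvd_general m I
end

section
/- Let R be a commutative Noetherian ring, σ a finite type, m a monomial order on σ →₀ ℕ, and I an ideal of MvPolynomial σ R. Then I has a finite Gröbner basis: there exists a finite set G of nonzero polynomials with G ⊆ I such that the ideal of MvPolynomial σ R generated by the head monomials {monomial (m.degree g) (m.leadCoeff g) | g ∈ G} equals the ideal generated by all head monomials {monomial (m.degree p) (m.leadCoeff p) | p ∈ I, p ≠ 0}. -/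
open MvPolynomial

/-! By Hilbert's basis theorem `MvPolynomial σ R` is Noetherian, so the ideal spanned by the head
monomials of the nonzero elements of `I` is already spanned by finitely many of them; the
polynomials of `I` those finitely many head monomials come from form a Gröbner basis. -/

theorem Submodule.exists_finset_subset_span_image_eq {R M α : Type*} [Semiring R]
    [AddCommMonoid M] [Module R M] [IsNoetherian R M] (f : α → M) (s : Set α) :
    ∃ t : Finset α, ↑t ⊆ s ∧ span R (f '' t) = span R (f '' s) := by
  classical
  obtain ⟨u, hus, hspan⟩ :=
    (fg_span_iff_fg_span_finset_subset (f '' s)).1 (IsNoetherian.noetherian (R := R) _)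
  obtain ⟨t, hts, rfl⟩ := Finset.subset_set_image_iff.1 hus
  exact ⟨t, hts, by rw [hspan, Finset.coe_image]⟩

/-- Every ideal over a Noetherian coefficient ring has a finite Gröbner basis. -/
theorem exists_groebner_basis {σ R : Type*} [CommRing R] [IsNoetherianRing R] [Finite σ]
    (m : MonomialOrder σ) (I : Ideal (MvPolynomial σ R)) :
    ∃ G : Finset (MvPolynomial σ R), (∀ g ∈ G, g ≠ 0) ∧ (G : Set (MvPolynomial σ R)) ⊆ I ∧
      Ideal.span {q : MvPolynomial σ R | ∃ g ∈ G, q = monomial (m.degree' g) (m.leadCoeff' g)} =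
        Ideal.span {q : MvPolynomial σ R |
          ∃ p ∈ I, p ≠ 0 ∧ q = monomial (m.degree' p) (m.leadCoeff' p)} := by
  obtain ⟨G, hGI, hspan⟩ := Submodule.exists_finset_subset_span_image_eq (R := MvPolynomial σ R)
    (fun p => monomial (m.degree' p) (m.leadCoeff' p)) {p | p ∈ I ∧ p ≠ 0}
  refine ⟨G, fun g hg => (hGI hg).2, fun g hg => (hGI hg).1, ?_⟩
  convert hspan using 2 <;> ext q <;> simp [eq_comm, and_assoc]
end

section
/- Let R be a commutative ring, σ a finite type, m a monomial order on σ →₀ ℕ, I an ideal of MvPolynomial σ R, and G a finite Gröbner basis of I with respect to m. Then every nonzero p ∈ I has a standard representation with respect to G: there is a family of polynomials (q_g)_{g ∈ G} such that p = Σ_{g ∈ G} q_g * g and, for every g ∈ G with q_g * g ≠ 0, m.toSyn (m.degree (q_g * g)) ≤ m.toSyn (m.degree p). -/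
open MvPolynomial

/-- Head coefficient of a polynomial with respect to a monomial order. -/
noncomputable def MonomialOrder.leadCoeff {σ R : Type*} [CommSemiring R] (m : MonomialOrder σ)
    (p : MvPolynomial σ R) : R :=
  p.coeff (m.degree' p)

namespace MvPolynomial

variable {σ R ι : Type*} [CommSemiring R]

theorem coeff_mem_span_of_mem_span_monomial {s : Set ι} {d : ι → σ →₀ ℕ} {a : ι → R}
    {x : MvPolynomial σ R} (hx : x ∈ Ideal.span ((fun i => monomial (d i) (a i)) '' s))
    (e : σ →₀ ℕ) : x.coeff e ∈ Ideal.span (a '' {i | i ∈ s ∧ d i ≤ e}) := by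
  classical
  induction hx using Submodule.span_induction generalizing e with
  | mem y hy =>
    obtain ⟨i, hi, rfl⟩ := hy
    rw [coeff_monomial]
    split_ifs with h
    · exact Ideal.subset_span ⟨i, ⟨hi, h.le⟩, rfl⟩
    · exact zero_mem _
  | zero => simp
  | add y z _ _ hy hz => simpa using add_mem (hy e) (hz e)
  | smul r y _ hy =>
    rw [smul_eq_mul, coeff_mul]
    refine sum_mem fun uv huv => Ideal.mul_mem_left _ _ (Ideal.span_mono ?_ (hy uv.2))
    exact Set.image_mono fun i ⟨hi, hle⟩ =>
      ⟨hi, hle.trans (Finset.HasAntidiagonal.antidiagonal.snd_le huv)⟩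

end MvPolynomial

namespace MonomialOrder

variable {σ R : Type*} (m : MonomialOrder σ)

section CommSemiring

variable [CommSemiring R]

theorem degree'_eq_degree (p : MvPolynomial σ R) : m.degree' p = m.degree p := rfl

theorem leadCoeff_eq_leadingCoeff (p : MvPolynomial σ R) : m.leadCoeff p = m.leadingCoeff p :=
  rfl

variable {m}

theorem degree_monomial_sub_degree_mul_le {g : MvPolynomial σ R} {d : σ →₀ ℕ}
    (hg : m.degree g ≤ d) (c : R) : m.degree (monomial (d - m.degree g) c * g) ≼[m] d := by
  calc m.toSyn (m.degree (monomial (d - m.degree g) c * g))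
      ≤ m.toSyn (m.degree (monomial (d - m.degree g) c)) + m.toSyn (m.degree g) := by
        rw [← map_add]; exact degree_mul_le
    _ ≤ m.toSyn (d - m.degree g) + m.toSyn (m.degree g) := by
        gcongr; exact degree_monomial_le c
    _ = m.toSyn d := by rw [← map_add, tsub_add_cancel_of_le hg]

theorem coeff_monomial_sub_degree_mul {g : MvPolynomial σ R} {d : σ →₀ ℕ}
    (hg : m.degree g ≤ d) (c : R) :
    (monomial (d - m.degree g) c * g).coeff d = c * m.leadingCoeff g := by
  rw [coeff_monomial_mul', if_pos tsub_le_self, tsub_tsub_cancel_of_le hg, leadingCoeff]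

def IsStandardRepresentation (G : Finset (MvPolynomial σ R)) (p : MvPolynomial σ R)
    (q : MvPolynomial σ R → MvPolynomial σ R) : Prop :=
  p = ∑ g ∈ G, q g * g ∧ ∀ g ∈ G, m.degree (q g * g) ≼[m] m.degree p

theorem isStandardRepresentation_zero (G : Finset (MvPolynomial σ R)) :
    m.IsStandardRepresentation G 0 0 := by
  simp [IsStandardRepresentation]

end CommSemiring

section CommRing

variable [CommRing R] {m}

theorem sub_eq_zero_or_degree_sub_lt {p q : MvPolynomial σ R} (hq : m.degree q ≼[m] m.degree p)
    (hc : q.coeff (m.degree p) = m.leadingCoeff p) :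
    p - q = 0 ∨ m.degree (p - q) ≺[m] m.degree p := by
  refine or_iff_not_imp_left.2 fun hpq => lt_of_le_of_ne ?_ fun h => ?_
  · exact degree_sub_le.trans (sup_le le_rfl hq)
  · apply m.leadingCoeff_ne_zero_iff.2 hpq
    rw [leadingCoeff, m.toSyn.injective h, coeff_sub, hc, leadingCoeff, sub_self]

theorem IsStandardRepresentation.add {G : Finset (MvPolynomial σ R)} {p p' : MvPolynomial σ R}
    {h q : MvPolynomial σ R → MvPolynomial σ R} (hq : m.IsStandardRepresentation G p' q)
    (hp' : p - ∑ g ∈ G, h g * g = p') (hdeg : m.degree p' ≼[m] m.degree p)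
    (hh : ∀ g ∈ G, m.degree (h g * g) ≼[m] m.degree p) :
    m.IsStandardRepresentation G p (h + q) := by
  refine ⟨?_, fun g hg => ?_⟩
  · simp only [Pi.add_apply, add_mul, Finset.sum_add_distrib, ← hq.1, ← hp']
    ring
  · rw [Pi.add_apply, add_mul]
    exact degree_add_le.trans (sup_le (hh g hg) ((hq.2 g hg).trans hdeg))

theorem exists_sub_sum_eq_zero_or_degree_lt {G : Finset (MvPolynomial σ R)}
    {p : MvPolynomial σ R}
    (hp : m.leadingCoeff p ∈ Ideal.span (m.leadingCoeff '' {g | g ∈ G ∧ m.degree g ≤ m.degree p})) :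
    ∃ h : MvPolynomial σ R → MvPolynomial σ R,
      (∀ g ∈ G, m.degree (h g * g) ≼[m] m.degree p) ∧
      (p - ∑ g ∈ G, h g * g = 0 ∨ m.degree (p - ∑ g ∈ G, h g * g) ≺[m] m.degree p) := by
  obtain ⟨l, hl, hsum⟩ := (Finsupp.mem_span_image_iff_linearCombination R).1 hp
  have hlG : l ∈ Finsupp.supported R R (G : Set (MvPolynomial σ R)) :=
    Finsupp.supported_mono (fun g hg => hg.1) hl
  have hl0 : ∀ g, ¬ m.degree g ≤ m.degree p → l g = 0 := fun g hg =>
    Finsupp.notMem_support_iff.1 fun hmem => hg ((Finsupp.mem_supported R l).1 hl hmem).2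
  set h := fun g => monomial (m.degree p - m.degree g) (l g)
  have hdeg : ∀ g, m.degree (h g * g) ≼[m] m.degree p := fun g => by
    by_cases hg : m.degree g ≤ m.degree p
    · exact degree_monomial_sub_degree_mul_le hg _
    · simp [h, hl0 g hg]
  have hcoeff : ∀ g, (h g * g).coeff (m.degree p) = l g * m.leadingCoeff g := fun g => by
    by_cases hg : m.degree g ≤ m.degree p
    · exact coeff_monomial_sub_degree_mul hg _
    · simp [h, hl0 g hg]
  refine ⟨h, fun g _ => hdeg g, sub_eq_zero_or_degree_sub_lt
    (degree_sum_le.trans (Finset.sup_le fun g _ => hdeg g)) ?_⟩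
  rw [← hsum, Finsupp.linearCombination_apply_of_mem_supported R hlG, coeff_sum]
  exact Finset.sum_congr rfl fun g _ => hcoeff g

theorem exists_isStandardRepresentation {I : Ideal (MvPolynomial σ R)}
    {G : Finset (MvPolynomial σ R)} (hGI : (G : Set (MvPolynomial σ R)) ⊆ I)
    (hlc : ∀ p ∈ I, p ≠ 0 →
      m.leadingCoeff p ∈ Ideal.span (m.leadingCoeff '' {g | g ∈ G ∧ m.degree g ≤ m.degree p}))
    {p : MvPolynomial σ R} (hp : p ∈ I) : ∃ q, m.IsStandardRepresentation G p q := by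
  induction hd : m.toSyn (m.degree p) using WellFoundedLT.induction generalizing p with
  | ind d ih =>
  subst hd
  by_cases hp0 : p = 0
  · exact hp0 ▸ ⟨0, isStandardRepresentation_zero G⟩
  obtain ⟨h, hh, hred⟩ := exists_sub_sum_eq_zero_or_degree_lt (hlc p hp hp0)
  set p' := p - ∑ g ∈ G, h g * g
  have hp'I : p' ∈ I :=
    sub_mem hp (sum_mem fun g hg => Ideal.mul_mem_left _ _ (hGI hg))
  obtain ⟨q, hq, hdeg⟩ :
      ∃ q, m.IsStandardRepresentation G p' q ∧ m.degree p' ≼[m] m.degree p := by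
    rcases hred with hp'0 | hlt
    · exact ⟨0, hp'0 ▸ isStandardRepresentation_zero G, by simp [hp'0]⟩
    · exact (ih _ hlt hp'I rfl).imp fun q hq => ⟨hq, hlt.le⟩
  exact ⟨h + q, hq.add rfl hdeg hh⟩

end CommRing

end MonomialOrder

theorem exists_standard_representation_general {σ R : Type*} [CommRing R]
    (m : MonomialOrder σ) (I : Ideal (MvPolynomial σ R)) (G : Finset (MvPolynomial σ R))
    (hGI : (G : Set (MvPolynomial σ R)) ⊆ I)
    (hGB : Ideal.span {q : MvPolynomial σ R |
        ∃ g ∈ G, q = monomial (m.degree' g) (m.leadCoeff g)} =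
      Ideal.span {q : MvPolynomial σ R |
        ∃ p ∈ I, p ≠ 0 ∧ q = monomial (m.degree' p) (m.leadCoeff p)}) :
    ∀ p ∈ I, p ≠ 0 →
      ∃ q : MvPolynomial σ R → MvPolynomial σ R,
        p = ∑ g ∈ G, q g * g ∧
        ∀ g ∈ G, q g * g ≠ 0 → m.toSyn (m.degree' (q g * g)) ≤ m.toSyn (m.degree' p) := by
  simp only [m.degree'_eq_degree, m.leadCoeff_eq_leadingCoeff] at hGB ⊢
  have hG : {q | ∃ g ∈ G, q = monomial (m.degree g) (m.leadingCoeff g)} =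
      (fun g => monomial (m.degree g) (m.leadingCoeff g)) '' G := by
    ext q
    simp [eq_comm]
  have hlc : ∀ p ∈ I, p ≠ 0 →
      m.leadingCoeff p ∈ Ideal.span (m.leadingCoeff '' {g | g ∈ G ∧ m.degree g ≤ m.degree p}) := by
    intro p hp hp0
    have hmem : monomial (m.degree p) (m.leadingCoeff p) ∈
        Ideal.span ((fun g => monomial (m.degree g) (m.leadingCoeff g)) '' G) := by
      rw [← hG, hGB]
      exact Ideal.subset_span ⟨p, hp, hp0, rfl⟩
    classical
    simpa using coeff_mem_span_of_mem_span_monomial hmem (m.degree p)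
  intro p hp _
  obtain ⟨q, hsum, hdeg⟩ := m.exists_isStandardRepresentation hGI hlc hp
  exact ⟨q, hsum, fun g hg _ => hdeg g hg⟩

/-- Every nonzero element of an ideal has a standard representation with respect to a
Gröbner basis of the ideal. -/
theorem exists_standard_representation {σ R : Type*} [CommRing R] [Finite σ]
    (m : MonomialOrder σ) (I : Ideal (MvPolynomial σ R)) (G : Finset (MvPolynomial σ R))
    (hG0 : ∀ g ∈ G, g ≠ 0) (hGI : (G : Set (MvPolynomial σ R)) ⊆ I)
    (hGB : Ideal.span {q : MvPolynomial σ R |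
        ∃ g ∈ G, q = monomial (m.degree' g) (m.leadCoeff g)} =
      Ideal.span {q : MvPolynomial σ R |
        ∃ p ∈ I, p ≠ 0 ∧ q = monomial (m.degree' p) (m.leadCoeff p)}) :
    ∀ p ∈ I, p ≠ 0 →
      ∃ q : MvPolynomial σ R → MvPolynomial σ R,
        p = ∑ g ∈ G, q g * g ∧
        ∀ g ∈ G, q g * g ≠ 0 → m.toSyn (m.degree' (q g * g)) ≤ m.toSyn (m.degree' p) :=
  exists_standard_representation_general m I G hGI hGB
end

section
/- Let R be a commutative ring, σ a finite type, and m a monomial order on σ →₀ ℕ. Let (c_i, t_i)_{i ∈ F} be a finite family with c_i : R and t_i : σ →₀ ℕ. Then for c : R and t : σ →₀ ℕ, the monomial c·X^t (i.e., monomial t c) lies in the ideal of MvPolynomial σ R generated by {monomial t_i c_i | i ∈ F} if and only if c lies in the ideal of R generated by {c_i | i ∈ F, t_i ≤ t}. -/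
/-!
A monomial ideal is detected coefficientwise: in every element of the ideal generated by the
`cᵢ Xᵗⁱ`, the coefficient of `Xᵘ` lies in the ideal of `R` generated by the `cᵢ` with `tᵢ ≤ u`,
because multiplication only shifts exponents upwards. Conversely `cᵢ Xᵘ = Xᵘ⁻ᵗⁱ · cᵢ Xᵗⁱ`
whenever `tᵢ ≤ u`.
-/

open MvPolynomial

namespace MvPolynomial

variable {σ R ι : Type*} [CommSemiring R] (s : Set ι) (ci : ι → R) (ti : ι → (σ →₀ ℕ))

theorem coeff_mem_span_of_mem_span_monomials {p : MvPolynomial σ R}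
    (hp : p ∈ Ideal.span {q : MvPolynomial σ R | ∃ i ∈ s, q = monomial (ti i) (ci i)})
    (u : σ →₀ ℕ) : coeff u p ∈ Ideal.span {a : R | ∃ i ∈ s, ti i ≤ u ∧ a = ci i} := by
  classical
  induction hp using Submodule.span_induction generalizing u with
  | mem q hq =>
    obtain ⟨i, hi, rfl⟩ := hq
    rw [coeff_monomial]
    split_ifs with h
    · exact Ideal.subset_span ⟨i, hi, h.le, rfl⟩
    · exact Ideal.zero_mem _
  | zero => simp only [coeff_zero, Ideal.zero_mem]
  | add x y _ _ hx hy => simpa only [coeff_add] using Ideal.add_mem _ (hx u) (hy u)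
  | smul q x _ hx =>
    rw [smul_eq_mul, coeff_mul]
    refine Ideal.sum_mem _ fun vw hvw => Ideal.mul_mem_left _ _ ?_
    refine Ideal.span_mono ?_ (hx vw.2)
    rintro a ⟨i, hi, hti, rfl⟩
    exact ⟨i, hi, hti.trans (Finset.HasAntidiagonal.antidiagonal.snd_le hvw), rfl⟩

theorem monomial_mem_span_monomials_of_mem {c : R} {u : σ →₀ ℕ}
    (hc : c ∈ Ideal.span {a : R | ∃ i ∈ s, ti i ≤ u ∧ a = ci i}) :
    monomial u c ∈ Ideal.span {q : MvPolynomial σ R | ∃ i ∈ s, q = monomial (ti i) (ci i)} := by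
  induction hc using Submodule.span_induction with
  | mem a ha =>
    obtain ⟨i, hi, hti, rfl⟩ := ha
    have hfactor : monomial u (ci i) = monomial (u - ti i) 1 * monomial (ti i) (ci i) := by
      rw [monomial_mul, one_mul, tsub_add_cancel_of_le hti]
    exact hfactor ▸ Ideal.mul_mem_left _ _ (Ideal.subset_span ⟨i, hi, rfl⟩)
  | zero => simp only [map_zero, Ideal.zero_mem]
  | add x y _ _ hx hy => simpa only [map_add] using Ideal.add_mem _ hx hy
  | smul r x _ hx => simpa only [smul_eq_mul, C_mul_monomial] using Ideal.mul_mem_left _ (C r) hx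

theorem mem_span_monomials_iff {p : MvPolynomial σ R} :
    p ∈ Ideal.span {q : MvPolynomial σ R | ∃ i ∈ s, q = monomial (ti i) (ci i)} ↔
      ∀ u, coeff u p ∈ Ideal.span {a : R | ∃ i ∈ s, ti i ≤ u ∧ a = ci i} := by
  refine ⟨coeff_mem_span_of_mem_span_monomials s ci ti, fun h => ?_⟩
  rw [p.as_sum]
  exact Ideal.sum_mem _ fun u _ => monomial_mem_span_monomials_of_mem s ci ti (h u)

end MvPolynomial

theorem monomial_mem_span_monomials_iff_general {σ R ι : Type*} [CommRing R]
    (F : Finset ι) (ci : ι → R) (ti : ι → (σ →₀ ℕ))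
    (c : R) (t : σ →₀ ℕ) :
    (monomial t c : MvPolynomial σ R) ∈
        Ideal.span {q : MvPolynomial σ R | ∃ i ∈ F, q = monomial (ti i) (ci i)} ↔
      c ∈ Ideal.span {a : R | ∃ i ∈ F, ti i ≤ t ∧ a = ci i} := by
  classical
  refine (mem_span_monomials_iff (F : Set ι) ci ti).trans ⟨fun h => by simpa using h t, ?_⟩
  intro hc u
  rw [coeff_monomial]
  split_ifs with htu
  · exact htu ▸ hc
  · exact Ideal.zero_mem _

/-- A monomial c·Xᵗ belongs to the ideal generated by a finite family of monomials
cᵢ·X^{tᵢ} if and only if c belongs to the ideal of R generated by those cᵢ whose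
term tᵢ divides t. -/
theorem monomial_mem_span_monomials_iff {σ R ι : Type*} [CommRing R] [Finite σ]
    (m : MonomialOrder σ) (F : Finset ι) (ci : ι → R) (ti : ι → (σ →₀ ℕ))
    (c : R) (t : σ →₀ ℕ) :
    (monomial t c : MvPolynomial σ R) ∈
        Ideal.span {q : MvPolynomial σ R | ∃ i ∈ F, q = monomial (ti i) (ci i)} ↔
      c ∈ Ideal.span {a : R | ∃ i ∈ F, ti i ≤ t ∧ a = ci i} :=
  monomial_mem_span_monomials_iff_general F ci ti c t
end

section
/- Let k be a field, σ a finite type, m a monomial order on σ →₀ ℕ, I an ideal of MvPolynomial σ k, and G a finite Gröbner basis of I with respect to m. If p and q are polynomials in MvPolynomial σ k that are both in normal form with respect to G (no term occurring with nonzero coefficient in p, respectively q, is divisible by the head term of any element of G) and p − q ∈ I, then p = q. -/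
open MvPolynomial

/-! The difference `p - q` lies in `I`, so if it were nonzero its head term would be divisible by
the head term of some `g ∈ G`; but that head term occurs in `p` or in `q`, which are in normal
form. -/

theorem MonomialOrder.degree'_eq_degree_s8 {σ R : Type*} [CommSemiring R] (m : MonomialOrder σ)
    (p : MvPolynomial σ R) : m.degree' p = m.degree p :=
  rfl

theorem MonomialOrder.leadCoeff'_eq_leadingCoeff {σ R : Type*} [CommSemiring R]
    (m : MonomialOrder σ) (p : MvPolynomial σ R) : m.leadCoeff' p = m.leadingCoeff p :=
  rfl

theorem MvPolynomial.exists_le_of_mem_span_monomial {σ ι R : Type*} [CommSemiring R]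
    {S : Set ι} {d : ι → σ →₀ ℕ} {c : ι → R} {x : MvPolynomial σ R}
    (hx : x ∈ Ideal.span {q | ∃ i ∈ S, q = monomial (d i) (c i)})
    {t : σ →₀ ℕ} (ht : t ∈ x.support) :
    ∃ i ∈ S, d i ≤ t := by
  have hspan : Ideal.span {q | ∃ i ∈ S, q = monomial (d i) (c i)} ≤
      Ideal.span ((fun s => monomial s (1 : R)) '' (d '' S)) := by
    rw [Ideal.span_le]
    rintro _ ⟨i, hi, rfl⟩
    rw [← mul_one (c i), ← C_mul_monomial]
    exact Ideal.mul_mem_left _ _ (Ideal.subset_span ⟨d i, ⟨i, hi, rfl⟩, rfl⟩)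
  obtain ⟨_, ⟨i, hi, rfl⟩, hle⟩ := mem_ideal_span_monomial_image.mp (hspan hx) t ht
  exact ⟨i, hi, hle⟩

theorem MonomialOrder.degree'_mem_support_monomial_leadCoeff' {σ R : Type*} [CommSemiring R]
    (m : MonomialOrder σ) {p : MvPolynomial σ R} (hp : p ≠ 0) :
    m.degree' p ∈ (monomial (m.degree' p) (m.leadCoeff' p)).support := by
  classical
  rw [mem_support_iff, coeff_monomial, if_pos rfl, m.leadCoeff'_eq_leadingCoeff]
  exact m.leadingCoeff_ne_zero_iff.mpr hp

theorem MonomialOrder.exists_degree'_le_of_mem {σ R : Type*} [CommSemiring R]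
    (m : MonomialOrder σ) {I : Ideal (MvPolynomial σ R)} {G : Set (MvPolynomial σ R)}
    (hGB : Ideal.span {q | ∃ p ∈ I, p ≠ 0 ∧ q = monomial (m.degree' p) (m.leadCoeff' p)} ≤
      Ideal.span {q | ∃ g ∈ G, q = monomial (m.degree' g) (m.leadCoeff' g)})
    {r : MvPolynomial σ R} (hrI : r ∈ I) (hr0 : r ≠ 0) :
    ∃ g ∈ G, m.degree' g ≤ m.degree' r :=
  exists_le_of_mem_span_monomial (hGB (Ideal.subset_span ⟨r, hrI, hr0, rfl⟩))
    (m.degree'_mem_support_monomial_leadCoeff' hr0)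

theorem normalForm_unique_general {σ k : Type*} [Field k]
    (m : MonomialOrder σ) (I : Ideal (MvPolynomial σ k)) (G : Finset (MvPolynomial σ k))
    (hGB : Ideal.span {q : MvPolynomial σ k |
        ∃ g ∈ G, q = monomial (m.degree' g) (m.leadCoeff' g)} =
      Ideal.span {q : MvPolynomial σ k |
        ∃ p ∈ I, p ≠ 0 ∧ q = monomial (m.degree' p) (m.leadCoeff' p)})
    (p q : MvPolynomial σ k)
    (hp : ∀ s ∈ p.support, ∀ g ∈ G, ¬ m.degree' g ≤ s)
    (hq : ∀ s ∈ q.support, ∀ g ∈ G, ¬ m.degree' g ≤ s)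
    (hpq : p - q ∈ I) :
    p = q := by
  classical
  by_contra hne
  have hr0 : p - q ≠ 0 := sub_ne_zero.mpr hne
  obtain ⟨g, hg, hle⟩ :=
    m.exists_degree'_le_of_mem (G := (G : Set (MvPolynomial σ k))) hGB.ge hpq hr0
  have hdeg : m.degree' (p - q) ∈ p.support ∪ q.support := by
    rw [m.degree'_eq_degree_s8]
    exact support_sub σ p q (m.degree_mem_support hr0)
  rcases Finset.mem_union.mp hdeg with hs | hs
  · exact hp _ hs g hg hle
  · exact hq _ hs g hg hle

/-- Uniqueness of normal forms with respect to a Gröbner basis over a field: two polynomials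
in normal form with respect to G that are congruent modulo the ideal are equal. -/
theorem normalForm_unique {σ k : Type*} [Field k] [Finite σ]
    (m : MonomialOrder σ) (I : Ideal (MvPolynomial σ k)) (G : Finset (MvPolynomial σ k))
    (hG0 : ∀ g ∈ G, g ≠ 0) (hGI : (G : Set (MvPolynomial σ k)) ⊆ I)
    (hGB : Ideal.span {q : MvPolynomial σ k |
        ∃ g ∈ G, q = monomial (m.degree' g) (m.leadCoeff' g)} =
      Ideal.span {q : MvPolynomial σ k |
        ∃ p ∈ I, p ≠ 0 ∧ q = monomial (m.degree' p) (m.leadCoeff' p)})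
    (p q : MvPolynomial σ k)
    (hp : ∀ s ∈ p.support, ∀ g ∈ G, ¬ m.degree' g ≤ s)
    (hq : ∀ s ∈ q.support, ∀ g ∈ G, ¬ m.degree' g ≤ s)
    (hpq : p - q ∈ I) :
    p = q :=
  normalForm_unique_general m I G hGB p q hp hq hpq
end

section
/- Let k be a field, σ a finite type, m a monomial order on σ →₀ ℕ, and I an ideal of MvPolynomial σ k. If G and G' are both reduced Gröbner bases of I with respect to m, then G = G'. -/
open MvPolynomial

/-- Head term of a polynomial with respect to a monomial order. -/
noncomputable def MonomialOrder.headDegree {σ R : Type*} [CommSemiring R] (m : MonomialOrder σ)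
    (p : MvPolynomial σ R) : σ →₀ ℕ :=
  m.toSyn.symm (p.support.sup fun s => m.toSyn s)

/-- Head coefficient of a polynomial with respect to a monomial order. -/
noncomputable def MonomialOrder.headCoeff {σ R : Type*} [CommSemiring R] (m : MonomialOrder σ)
    (p : MvPolynomial σ R) : R :=
  p.coeff (m.headDegree p)

/-- A Gröbner basis of an ideal. -/
def IsGroebnerBasis {σ k : Type*} [Field k] (m : MonomialOrder σ)
    (I : Ideal (MvPolynomial σ k)) (G : Finset (MvPolynomial σ k)) : Prop :=
  (∀ g ∈ G, g ≠ 0) ∧ (G : Set (MvPolynomial σ k)) ⊆ I ∧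
    Ideal.span {q : MvPolynomial σ k |
        ∃ g ∈ G, q = monomial (m.headDegree g) (m.headCoeff g)} =
      Ideal.span {q : MvPolynomial σ k |
        ∃ p ∈ I, p ≠ 0 ∧ q = monomial (m.headDegree p) (m.headCoeff p)}

/-- A reduced Gröbner basis: every element is monic and none of its exponent vectors is
divisible by the head term of another element of the basis. -/
def IsReducedGroebnerBasis {σ k : Type*} [Field k] (m : MonomialOrder σ)
    (I : Ideal (MvPolynomial σ k)) (G : Finset (MvPolynomial σ k)) : Prop :=
  IsGroebnerBasis m I G ∧
    (∀ g ∈ G, m.headCoeff g = 1) ∧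
    ∀ g ∈ G, ∀ g' ∈ G, g' ≠ g → ∀ s ∈ g.support, ¬ m.headDegree g' ≤ s

/-!
If `g ∈ G`, its head term is divisible by that of some `g' ∈ G'`, which in turn is divisible by
that of some `g'' ∈ G`; reducedness of `G` forces `g'' = g`, so `g` and `g'` have the same head
term. Both being monic, `g - g' ∈ I` has a smaller head term, which lies in the support of `g` or
of `g'` and is divisible by the head term of an element of the corresponding basis: for a reduced
basis this is impossible unless `g = g'`.

`headDegree` and `headCoeff` are definitionally Mathlib's `MonomialOrder.degree` and
`MonomialOrder.leadingCoeff`; the argument is carried out with the latter.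
-/

namespace MonomialOrder

variable {σ R : Type*} (m : MonomialOrder σ)

theorem eq_degree_of_degree_le [CommSemiring R] {p : MvPolynomial σ R} {s : σ →₀ ℕ}
    (hs : s ∈ p.support) (hle : m.degree p ≤ s) : s = m.degree p :=
  m.toSyn.injective (le_antisymm (m.le_degree hs) (m.toSyn_monotone hle))

theorem degree_sub_ne_degree [CommRing R] {p q : MvPolynomial σ R} (hpq : p ≠ q)
    (hdeg : m.degree p = m.degree q) (hcoeff : m.leadingCoeff p = m.leadingCoeff q) :
    m.degree (p - q) ≠ m.degree p := by
  intro h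
  have hmem := m.degree_mem_support (sub_ne_zero.mpr hpq)
  rw [h, mem_support_iff, coeff_sub] at hmem
  rw [leadingCoeff, leadingCoeff, ← hdeg] at hcoeff
  exact hmem (sub_eq_zero.mpr hcoeff)

end MonomialOrder

section GroebnerBasis

variable {σ k : Type*} [Field k] {m : MonomialOrder σ} {I : Ideal (MvPolynomial σ k)}
  {G G' : Finset (MvPolynomial σ k)} {p g g' : MvPolynomial σ k}

theorem IsGroebnerBasis.exists_degree_le (hG : IsGroebnerBasis m I G) (hpI : p ∈ I)
    (hp : p ≠ 0) : ∃ g ∈ G, m.degree g ≤ m.degree p := by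
  classical
  obtain ⟨-, -, hspan⟩ := hG
  have hlead_span : monomial (m.degree p) (m.leadingCoeff p) ∈ Ideal.span
      {q : MvPolynomial σ k | ∃ g ∈ G, q = monomial (m.headDegree g) (m.headCoeff g)} :=
    hspan ▸ Ideal.subset_span ⟨p, hpI, hp, rfl⟩
  have hlead : monomial (m.degree p) (m.leadingCoeff p) ∈
      Ideal.span ((fun s => monomial s (1 : k)) '' (m.degree '' (G : Set (MvPolynomial σ k)))) := by
    refine Ideal.span_le.mpr ?_ hlead_span
    rintro _ ⟨g, hg, rfl⟩
    rw [← mul_one (m.headCoeff g), ← C_mul_monomial]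
    exact Ideal.mul_mem_left _ _ (Ideal.subset_span ⟨_, ⟨g, hg, rfl⟩, rfl⟩)
  have hsupp : m.degree p ∈ (monomial (m.degree p) (m.leadingCoeff p)).support := by
    rw [mem_support_iff, coeff_monomial, if_pos rfl]
    exact m.leadingCoeff_ne_zero_iff.mpr hp
  obtain ⟨_, ⟨g, hg, rfl⟩, hle⟩ := mem_ideal_span_monomial_image.mp hlead _ hsupp
  exact ⟨g, hg, hle⟩

namespace IsReducedGroebnerBasis

theorem eq_of_degree_le (hG : IsReducedGroebnerBasis m I G) (hg : g ∈ G) (hg' : g' ∈ G)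
    {s : σ →₀ ℕ} (hs : s ∈ g.support) (hle : m.degree g' ≤ s) : g' = g :=
  by_contra fun hne => hG.2.2 g hg g' hg' hne s hs hle

theorem degree_eq_of_degree_mem_support (hG : IsReducedGroebnerBasis m I G) (hg : g ∈ G)
    (hpI : p ∈ I) (hp : p ≠ 0) (hmem : m.degree p ∈ g.support) : m.degree p = m.degree g := by
  obtain ⟨h, hh, hle⟩ := hG.1.exists_degree_le hpI hp
  obtain rfl := hG.eq_of_degree_le hg hh hmem hle
  exact m.eq_degree_of_degree_le hmem hle

theorem exists_degree_eq (hG : IsReducedGroebnerBasis m I G) (hG' : IsReducedGroebnerBasis m I G')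
    (hg : g ∈ G) : ∃ g' ∈ G', m.degree g' = m.degree g := by
  have hg0 : g ≠ 0 := hG.1.1 g hg
  obtain ⟨g', hg', hle⟩ := hG'.1.exists_degree_le (hG.1.2.1 hg) hg0
  obtain ⟨g'', hg'', hle'⟩ := hG.1.exists_degree_le (hG'.1.2.1 hg') (hG'.1.1 g' hg')
  obtain rfl := hG.eq_of_degree_le hg hg'' (m.degree_mem_support hg0) (hle'.trans hle)
  exact ⟨g', hg', le_antisymm hle hle'⟩

theorem eq_of_degree_eq (hG : IsReducedGroebnerBasis m I G) (hG' : IsReducedGroebnerBasis m I G')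
    (hg : g ∈ G) (hg' : g' ∈ G') (hdeg : m.degree g = m.degree g') : g = g' := by
  classical
  by_contra hne
  have hsubI : g - g' ∈ I := I.sub_mem (hG.1.2.1 hg) (hG'.1.2.1 hg')
  have hsub0 : g - g' ≠ 0 := sub_ne_zero.mpr hne
  have hcoeff : m.leadingCoeff g = m.leadingCoeff g' := (hG.2.1 g hg).trans (hG'.2.1 g' hg').symm
  have hdeg_sub := m.degree_sub_ne_degree hne hdeg hcoeff
  rcases Finset.mem_union.mp (support_sub σ g g' (m.degree_mem_support hsub0)) with hmem | hmem
  · exact hdeg_sub (hG.degree_eq_of_degree_mem_support hg hsubI hsub0 hmem)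
  · exact hdeg_sub ((hG'.degree_eq_of_degree_mem_support hg' hsubI hsub0 hmem).trans hdeg.symm)

theorem subset (hG : IsReducedGroebnerBasis m I G) (hG' : IsReducedGroebnerBasis m I G') :
    G ⊆ G' := fun g hg => by
  obtain ⟨g', hg', hdeg⟩ := hG.exists_degree_eq hG' hg
  rwa [hG.eq_of_degree_eq hG' hg hg' hdeg.symm]

end IsReducedGroebnerBasis

end GroebnerBasis

theorem reducedGroebnerBasis_unique_general {σ k : Type*} [Field k]
    (m : MonomialOrder σ) (I : Ideal (MvPolynomial σ k)) (G G' : Finset (MvPolynomial σ k))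
    (hG : IsReducedGroebnerBasis m I G) (hG' : IsReducedGroebnerBasis m I G') :
    G = G' :=
  hG.subset hG' |>.antisymm (hG'.subset hG)

/-- Reduced Gröbner bases are unique. -/
theorem reducedGroebnerBasis_unique {σ k : Type*} [Field k] [Finite σ]
    (m : MonomialOrder σ) (I : Ideal (MvPolynomial σ k)) (G G' : Finset (MvPolynomial σ k))
    (hG : IsReducedGroebnerBasis m I G) (hG' : IsReducedGroebnerBasis m I G') :
    G = G' :=
  reducedGroebnerBasis_unique_general m I G G' hG hG'
end
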